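/- Let $0 \le \rho_1 < \rho_2$ and let $\mathbf{w}$ be a continuously differentiable divergence-free vector field on a neighborhood of the closed annulus $\{\rho_1 \le |z| \le \rho_2\}$ in $\mathbb{R}^2$ with vorticity $\omega = \partial_y w_1 - \partial_x w_2$. Then $|\bar{\mathbf w}(\rho_2) - \bar{\mathbf w}(\rho_1)| \le (\rho_2 - \rho_1) \cdot \max_{\rho_1 \le |z| \le \rho_2} |\omega(z)|$. -/

import Mathlib

open Real MeasureTheory Set Filter

noncomputable section

/-- The plane, as 2-dimensional Euclidean space. -/
abbrev Pt := EuclideanSpace ℝ (Fin 2)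

/-- The point with coordinates `(x, y)`. -/
def pt (x y : ℝ) : Pt := (WithLp.equiv 2 (Fin 2 → ℝ)).symm ![x, y]

/-- The open annulus `{z : r₁ < |z| < r₂}`. -/
def annulus (r₁ r₂ : ℝ) : Set Pt := {z | r₁ < ‖z‖ ∧ ‖z‖ < r₂}

/-- The point of the circle of radius `r` at angle `θ`. -/
def circlePt (r θ : ℝ) : Pt := pt (r * Real.cos θ) (r * Real.sin θ)

/-- Mean value of a scalar function over the circle of radius `r`. -/
def circleMean (f : Pt → ℝ) (r : ℝ) : ℝ :=
  (2 * Real.pi)⁻¹ * ∫ θ in (0:ℝ)..(2 * Real.pi), f (circlePt r θ)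

/-- Mean value of a vector field over the circle of radius `r` (componentwise). -/
def circleMeanV (w : Pt → Pt) (r : ℝ) : Pt :=
  (2 * Real.pi)⁻¹ • ∫ θ in (0:ℝ)..(2 * Real.pi), w (circlePt r θ)

/-- The Dirichlet integral of a scalar function over the annulus `r₁ < |z| < r₂`. -/
def dirichlet (f : Pt → ℝ) (r₁ r₂ : ℝ) : ℝ :=
  ∫ z in annulus r₁ r₂, ‖fderiv ℝ f z‖ ^ 2

/-- The Dirichlet integral of a vector field over the annulus `r₁ < |z| < r₂`. -/
def dirichletV (w : Pt → Pt) (r₁ r₂ : ℝ) : ℝ :=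
  ∫ z in annulus r₁ r₂, ‖fderiv ℝ w z‖ ^ 2

/-- First standard basis vector. -/
def e₀ : Pt := EuclideanSpace.single 0 1

/-- Second standard basis vector. -/
def e₁ : Pt := EuclideanSpace.single 1 1

/-- Divergence of a vector field on the plane. -/
def div2 (w : Pt → Pt) (z : Pt) : ℝ := fderiv ℝ w z e₀ 0 + fderiv ℝ w z e₁ 1

/-- Vorticity (scalar curl) `ω = ∂_y w₁ - ∂_x w₂` of a planar vector field. -/
def vort (w : Pt → Pt) (z : Pt) : ℝ := fderiv ℝ w z e₁ 0 - fderiv ℝ w z e₀ 1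

/-- Rotation by 90 degrees: `z^⊥ = (-y, x)`. -/
def perp (z : Pt) : Pt := pt (-(z 1)) (z 0)

open Topology

/-! ### Auxiliary lemmas -/

lemma pt_eq (x y : ℝ) : pt x y = x • e₀ + y • e₁ := by
  ext i; fin_cases i <;> simp [pt, e₀, e₁]

lemma norm_pt (x y : ℝ) : ‖pt x y‖ = Real.sqrt (x^2 + y^2) := by
  simp [EuclideanSpace.norm_eq, pt, Fin.sum_univ_two, sq_abs]

lemma norm_circlePt (r θ : ℝ) : ‖circlePt r θ‖ = |r| := by
  rw [circlePt, norm_pt, mul_pow, mul_pow, ← mul_add, Real.cos_sq_add_sin_sq, mul_one,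
    Real.sqrt_sq_eq_abs]

lemma circlePt_sub (r r' θ : ℝ) : circlePt r θ - circlePt r' θ = circlePt (r - r') θ := by
  ext i; fin_cases i <;> simp [circlePt, pt, sub_mul]

lemma norm_uvec (θ : ℝ) : ‖pt (Real.cos θ) (Real.sin θ)‖ = 1 := by
  rw [norm_pt, Real.cos_sq_add_sin_sq, Real.sqrt_one]

lemma norm_uperp (θ : ℝ) : ‖pt (Real.sin θ) (-(Real.cos θ))‖ = 1 := by
  rw [norm_pt, neg_pow]
  simp only [neg_one_sq, one_mul]
  rw [Real.sin_sq_add_cos_sq, Real.sqrt_one]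

/-- Key pointwise algebraic identity, using divergence-freeness. -/
lemma perp_alg (A : Pt →L[ℝ] Pt) (h0 : A e₀ 0 + A e₁ 1 = 0) (c s : ℝ) :
    perp (A (pt (-s) c)) = A (pt c s) - (A e₁ 0 - A e₀ 1) • pt s (-c) := by
  rw [pt_eq (-s) c, pt_eq c s, map_add, map_add, A.map_smul, A.map_smul, A.map_smul, A.map_smul]
  ext i
  fin_cases i <;>
    simp only [perp, pt, PiLp.add_apply, PiLp.smul_apply, PiLp.sub_apply, smul_eq_mul,
      PiLp.toLp_apply, Matrix.cons_val_zero, Matrix.cons_val_one, Matrix.head_cons] <;>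
    simp [Fin.isValue] <;>
    first
      | linear_combination (-c) * h0
      | linear_combination (-s) * h0
      | linear_combination c * h0
      | linear_combination s * h0

/-- Rotation by 90 degrees as a continuous linear map. -/
def perpL : Pt →L[ℝ] Pt := LinearMap.toContinuousLinearMap
  { toFun := perp
    map_add' := by intro x y; ext i; fin_cases i <;> simp [perp, pt] <;> ring
    map_smul' := by intro c x; ext i; fin_cases i <;> simp [perp, pt, mul_comm] }

lemma perpL_apply (z : Pt) : perpL z = perp z := rfl

lemma hasDerivAt_circlePt_r (θ r : ℝ) :
    HasDerivAt (fun s => circlePt s θ) (pt (Real.cos θ) (Real.sin θ)) r := by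
  have h : ∀ s, circlePt s θ = s • pt (Real.cos θ) (Real.sin θ) := by
    intro s; ext i; fin_cases i <;> simp [circlePt, pt]
  simp_rw [h]
  simpa using (hasDerivAt_id r).smul_const (pt (Real.cos θ) (Real.sin θ))

lemma hasDerivAt_circlePt_θ (r θ : ℝ) :
    HasDerivAt (fun t => circlePt r t) (r • pt (-(Real.sin θ)) (Real.cos θ)) θ := by
  have h : ∀ t, circlePt r t = (r * Real.cos t) • e₀ + (r * Real.sin t) • e₁ := by
    intro t; rw [circlePt, pt_eq]
  simp_rw [h]
  have h1 := (((Real.hasDerivAt_cos θ).const_mul r).smul_const e₀).add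
    (((Real.hasDerivAt_sin θ).const_mul r).smul_const e₁)
  refine h1.congr_deriv ?_
  rw [pt_eq]
  ext i; fin_cases i <;> simp [e₀, e₁, mul_comm]

lemma continuous_circlePt (r : ℝ) : Continuous (fun θ => circlePt r θ) :=
  continuous_iff_continuousAt.2 fun θ => (hasDerivAt_circlePt_θ r θ).continuousAt

lemma continuous_uvec : Continuous (fun θ => pt (Real.cos θ) (Real.sin θ)) := by
  have : (fun θ => pt (Real.cos θ) (Real.sin θ)) = fun θ => circlePt 1 θ := by
    funext θ; simp [circlePt]
  rw [this]; exact continuous_circlePt 1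

lemma continuous_uperp : Continuous (fun θ => pt (Real.sin θ) (-(Real.cos θ))) := by
  simp_rw [pt_eq]
  exact (Real.continuous_sin.smul continuous_const).add
    ((Real.continuous_cos.neg).smul continuous_const)

/-- the difference of circular means of a `C¹` divergence-free vector field is
bounded by `(ρ₂ - ρ₁)` times the maximum of the vorticity on the closed annulus. -/
theorem stmt_4 (ρ₁ ρ₂ : ℝ) (hρ₁ : 0 ≤ ρ₁) (hρ₁₂ : ρ₁ < ρ₂) (w : Pt → Pt)
    (U : Set Pt) (hU : IsOpen U) (hUsub : {z : Pt | ρ₁ ≤ ‖z‖ ∧ ‖z‖ ≤ ρ₂} ⊆ U)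
    (hw : ContDiffOn ℝ 1 w U)
    (hdiv : ∀ z ∈ U, div2 w z = 0)
    (M : ℝ) (hM : ∀ z : Pt, ρ₁ ≤ ‖z‖ → ‖z‖ ≤ ρ₂ → |vort w z| ≤ M) :
    ‖circleMeanV w ρ₂ - circleMeanV w ρ₁‖ ≤ (ρ₂ - ρ₁) * M := by
  set K : Set Pt := {z : Pt | ρ₁ ≤ ‖z‖ ∧ ‖z‖ ≤ ρ₂} with hKdef
  have hKclosed : IsClosed K := by
    have : K = (fun z : Pt => ‖z‖) ⁻¹' Icc ρ₁ ρ₂ := rfl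
    rw [this]; exact isClosed_Icc.preimage continuous_norm
  have hKcpt : IsCompact K := by
    refine Metric.isCompact_of_isClosed_isBounded hKclosed ?_
    exact (Metric.isBounded_closedBall (x := (0:Pt)) (r := ρ₂)).subset
      (fun z hz => by simpa [Metric.mem_closedBall, dist_zero_right] using hz.2)
  obtain ⟨ε, εpos, hεU⟩ := hKcpt.exists_thickening_subset_open hU hUsub
  set K' := Metric.cthickening (ε/2) K with hK'def
  have hK'U : K' ⊆ U :=
    (Metric.cthickening_subset_thickening' εpos (by linarith) K).trans hεU
  have hK'cpt : IsCompact K' := hKcpt.cthickening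
  -- membership of circles in K'
  have hmem : ∀ r₀ ∈ Icc ρ₁ ρ₂, ∀ r, |r - r₀| ≤ ε/2 → ∀ θ, circlePt r θ ∈ K' := by
    intro r₀ hr₀ r hr θ
    refine Metric.mem_cthickening_of_dist_le (circlePt r θ) (circlePt r₀ θ) _ _ ?_ ?_
    · exact ⟨by rw [norm_circlePt, abs_of_nonneg (hρ₁.trans hr₀.1)]; exact hr₀.1,
        by rw [norm_circlePt, abs_of_nonneg (hρ₁.trans hr₀.1)]; exact hr₀.2⟩
    · rw [dist_eq_norm, circlePt_sub, norm_circlePt]; exact hr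
  -- continuity facts
  have hwc : ContinuousOn w U := hw.continuousOn
  have hfderiv_cont : ContinuousOn (fderiv ℝ w) U :=
    hw.continuousOn_fderiv_of_isOpen hU le_rfl
  obtain ⟨C, hC⟩ : ∃ C, ∀ z ∈ K', ‖fderiv ℝ w z‖ ≤ C :=
    hK'cpt.exists_bound_of_continuousOn (hfderiv_cont.mono hK'U)
  have hF'cont : ∀ r, (∀ θ, circlePt r θ ∈ U) →
      Continuous (fun θ => fderiv ℝ w (circlePt r θ) (pt (Real.cos θ) (Real.sin θ))) := by
    intro r hr
    have h1 : Continuous (fun θ => fderiv ℝ w (circlePt r θ)) := by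
      have := hfderiv_cont.comp_continuous (continuous_circlePt r) hr
      exact this
    exact h1.clm_apply continuous_uvec
  have hvort_cont : ∀ r, (∀ θ, circlePt r θ ∈ U) →
      Continuous (fun θ => vort w (circlePt r θ)) := by
    intro r hr
    have h1 : Continuous (fun θ => fderiv ℝ w (circlePt r θ)) :=
      hfderiv_cont.comp_continuous (continuous_circlePt r) hr
    have h2 : Continuous (fun θ => fderiv ℝ w (circlePt r θ) e₁ 0) :=
      (PiLp.continuous_apply 2 _ (0 : Fin 2)).comp (h1.clm_apply continuous_const)
    have h3 : Continuous (fun θ => fderiv ℝ w (circlePt r θ) e₀ 1) :=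
      (PiLp.continuous_apply 2 _ (1 : Fin 2)).comp (h1.clm_apply continuous_const)
    exact h2.sub h3
  -- differentiation under the integral sign
  have hFderiv : ∀ r₀ ∈ Icc ρ₁ ρ₂,
      HasDerivAt (fun r => ∫ θ in (0:ℝ)..(2*π), w (circlePt r θ))
        (∫ θ in (0:ℝ)..(2*π),
          fderiv ℝ w (circlePt r₀ θ) (pt (Real.cos θ) (Real.sin θ))) r₀ := by
    intro r₀ hr₀
    have hmemU : ∀ r, |r - r₀| ≤ ε/2 → ∀ θ, circlePt r θ ∈ U := fun r hr θ =>
      hK'U (hmem r₀ hr₀ r hr θ)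
    have hballU : ∀ r ∈ Metric.ball r₀ (ε/2), ∀ θ, circlePt r θ ∈ U := fun r hr θ =>
      hmemU r (le_of_lt (by simpa [Real.dist_eq] using hr)) θ
    refine (intervalIntegral.hasDerivAt_integral_of_dominated_loc_of_deriv_le
      (F := fun r θ => w (circlePt r θ))
      (F' := fun r θ => fderiv ℝ w (circlePt r θ) (pt (Real.cos θ) (Real.sin θ)))
      (bound := fun _ => C) (Metric.ball_mem_nhds r₀ (half_pos εpos)) ?_ ?_ ?_ ?_ ?_ ?_).2
    · filter_upwards [Metric.ball_mem_nhds r₀ (half_pos εpos)] with r hr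
      exact (hwc.comp_continuous (continuous_circlePt r) (hballU r hr)).aestronglyMeasurable
    · exact (hwc.comp_continuous (continuous_circlePt r₀)
        (hballU r₀ (Metric.mem_ball_self (half_pos εpos)))).intervalIntegrable _ _
    · exact (hF'cont r₀ (hballU r₀ (Metric.mem_ball_self (half_pos εpos)))).aestronglyMeasurable
    · filter_upwards with θ _ r hr
      calc ‖fderiv ℝ w (circlePt r θ) (pt (Real.cos θ) (Real.sin θ))‖
          ≤ ‖fderiv ℝ w (circlePt r θ)‖ * ‖pt (Real.cos θ) (Real.sin θ)‖ :=
            (fderiv ℝ w (circlePt r θ)).le_opNorm _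
        _ ≤ C := by
            rw [norm_uvec, mul_one]
            exact hC _ (hmem r₀ hr₀ r (le_of_lt (by simpa [Real.dist_eq] using hr)) θ)
    · exact intervalIntegrable_const
    · filter_upwards with θ _ r hr
      have hz : circlePt r θ ∈ U := hballU r hr θ
      have hdw : DifferentiableAt ℝ w (circlePt r θ) :=
        (hw.contDiffAt (hU.mem_nhds hz)).differentiableAt one_ne_zero
      exact hdw.hasFDerivAt.comp_hasDerivAt r (hasDerivAt_circlePt_r θ r)
  -- rewriting the derivative using the vorticity
  have hrepr : ∀ r₀ ∈ Icc ρ₁ ρ₂, 0 < r₀ →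
      (∫ θ in (0:ℝ)..(2*π), fderiv ℝ w (circlePt r₀ θ) (pt (Real.cos θ) (Real.sin θ)))
        = ∫ θ in (0:ℝ)..(2*π), vort w (circlePt r₀ θ) • pt (Real.sin θ) (-(Real.cos θ)) := by
    intro r₀ hr₀ hr₀pos
    have hzU : ∀ θ, circlePt r₀ θ ∈ U := fun θ =>
      hK'U (hmem r₀ hr₀ r₀ (by simp [le_of_lt (half_pos εpos)]) θ)
    set H : ℝ → Pt := fun θ => r₀⁻¹ • perpL (w (circlePt r₀ θ)) with hHdef
    have hH : ∀ θ, HasDerivAt H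
        (fderiv ℝ w (circlePt r₀ θ) (pt (Real.cos θ) (Real.sin θ))
          - vort w (circlePt r₀ θ) • pt (Real.sin θ) (-(Real.cos θ))) θ := by
      intro θ
      have hz := hzU θ
      have hdw : DifferentiableAt ℝ w (circlePt r₀ θ) :=
        (hw.contDiffAt (hU.mem_nhds hz)).differentiableAt one_ne_zero
      have h1 : HasDerivAt (fun t => w (circlePt r₀ t))
          (fderiv ℝ w (circlePt r₀ θ) (r₀ • pt (-(Real.sin θ)) (Real.cos θ))) θ :=
        hdw.hasFDerivAt.comp_hasDerivAt θ (hasDerivAt_circlePt_θ r₀ θ)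
      have h2 := (perpL.hasFDerivAt.comp_hasDerivAt θ h1).const_smul r₀⁻¹
      refine h2.congr_deriv ?_
      have h0 : fderiv ℝ w (circlePt r₀ θ) e₀ 0 + fderiv ℝ w (circlePt r₀ θ) e₁ 1 = 0 :=
        hdiv _ hz
      rw [(fderiv ℝ w (circlePt r₀ θ)).map_smul, perpL.map_smul, smul_smul,
        inv_mul_cancel₀ (ne_of_gt hr₀pos), one_smul, perpL_apply,
        perp_alg _ h0]
      rfl
    have hF'int : IntervalIntegrable
        (fun θ => fderiv ℝ w (circlePt r₀ θ) (pt (Real.cos θ) (Real.sin θ)))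
        volume 0 (2*π) := (hF'cont r₀ hzU).intervalIntegrable _ _
    have hgint : IntervalIntegrable
        (fun θ => vort w (circlePt r₀ θ) • pt (Real.sin θ) (-(Real.cos θ)))
        volume 0 (2*π) := ((hvort_cont r₀ hzU).smul continuous_uperp).intervalIntegrable _ _
    have hHint := intervalIntegral.integral_eq_sub_of_hasDerivAt
      (f := H) (fun θ _ => hH θ) (hF'int.sub hgint)
    have hper : H (2*π) = H 0 := by
      have : circlePt r₀ (2*π) = circlePt r₀ 0 := by
        simp [circlePt, Real.cos_two_pi, Real.sin_two_pi]
      rw [hHdef]; simp only [this]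
    rw [hper, sub_self] at hHint
    have := intervalIntegral.integral_sub hF'int hgint
    rw [hHint] at this
    exact sub_eq_zero.mp this.symm
  -- the derivative of the circle mean, and its bound
  set g : ℝ → Pt := fun r =>
    (2*π)⁻¹ • ∫ θ in (0:ℝ)..(2*π), vort w (circlePt r θ) • pt (Real.sin θ) (-(Real.cos θ))
    with hgdef
  have hg : ∀ r ∈ Icc ρ₁ ρ₂, 0 < r →
      HasDerivAt (circleMeanV w) (g r) r ∧ ‖g r‖ ≤ M := by
    intro r hr hrpos
    constructor
    · have h1 := (hFderiv r hr).const_smul ((2*π)⁻¹)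
      rw [hrepr r hr hrpos] at h1
      exact h1
    · have hzU : ∀ θ, circlePt r θ ∈ K := fun θ => by
        constructor <;> rw [norm_circlePt, abs_of_nonneg hrpos.le]
        exacts [hr.1, hr.2]
      have hb : ‖∫ θ in (0:ℝ)..(2*π),
          vort w (circlePt r θ) • pt (Real.sin θ) (-(Real.cos θ))‖ ≤ M * |2*π - 0| := by
        refine intervalIntegral.norm_integral_le_of_norm_le_const ?_
        intro θ _
        rw [norm_smul, norm_uperp, mul_one, Real.norm_eq_abs]
        exact hM _ (hzU θ).1 (hzU θ).2
      rw [hgdef]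
      simp only [norm_smul, Real.norm_eq_abs]
      calc |(2*π)⁻¹| * ‖∫ θ in (0:ℝ)..(2*π),
              vort w (circlePt r θ) • pt (Real.sin θ) (-(Real.cos θ))‖
          ≤ (2*π)⁻¹ * (M * |2*π - 0|) := by
            rw [abs_of_nonneg (by positivity : (0:ℝ) ≤ (2*π)⁻¹)]
            exact mul_le_mul_of_nonneg_left hb (by positivity)
        _ = M := by
            rw [sub_zero, abs_of_nonneg Real.two_pi_pos.le]
            field_simp
      -- done
  have main : ∀ a, ρ₁ ≤ a → 0 < a → a ≤ ρ₂ →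
      ‖circleMeanV w ρ₂ - circleMeanV w a‖ ≤ (ρ₂ - a) * M := by
    intro a h1 h2 h3
    have hsub : Icc a ρ₂ ⊆ Icc ρ₁ ρ₂ := Icc_subset_Icc h1 le_rfl
    have := Convex.norm_image_sub_le_of_norm_hasDerivWithin_le
      (f := circleMeanV w) (f' := g) (C := M) (s := Icc a ρ₂)
      (fun x hx => ((hg x (hsub hx) (lt_of_lt_of_le h2 hx.1)).1).hasDerivWithinAt)
      (fun x hx => (hg x (hsub hx) (lt_of_lt_of_le h2 hx.1)).2)
      (convex_Icc a ρ₂) (left_mem_Icc.2 h3) (right_mem_Icc.2 h3)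
    calc ‖circleMeanV w ρ₂ - circleMeanV w a‖ ≤ M * ‖ρ₂ - a‖ := this
      _ = (ρ₂ - a) * M := by
          rw [Real.norm_eq_abs, abs_of_nonneg (by linarith)]; ring
  rcases eq_or_lt_of_le hρ₁ with h0 | h0
  · -- ρ₁ = 0 : limiting argument
    have hcont : ContinuousAt (circleMeanV w) ρ₁ :=
      ((hFderiv ρ₁ ⟨le_rfl, hρ₁₂.le⟩).const_smul ((2*π)⁻¹)).continuousAt
    have t1 : Tendsto (fun a => ‖circleMeanV w ρ₂ - circleMeanV w a‖) (𝓝[>] ρ₁)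
        (𝓝 ‖circleMeanV w ρ₂ - circleMeanV w ρ₁‖) :=
      (tendsto_const_nhds.sub (hcont.tendsto.mono_left nhdsWithin_le_nhds)).norm
    have t2 : Tendsto (fun a => (ρ₂ - a) * M) (𝓝[>] ρ₁) (𝓝 ((ρ₂ - ρ₁) * M)) :=
      ((tendsto_const_nhds.sub tendsto_id).mul_const M).mono_left nhdsWithin_le_nhds
    refine le_of_tendsto_of_tendsto t1 t2 ?_
    filter_upwards [Ioo_mem_nhdsGT_of_mem ⟨le_rfl, hρ₁₂⟩] with a ha
    exact main a ha.1.le (h0 ▸ ha.1) ha.2.le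
  · exact main ρ₁ le_rfl h0 hρ₁₂.le
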